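/- Let E₀ ∈ ℝ, let A be a real-valued twice continuously differentiable function on a neighborhood of E₀ with A'(E₀) > 0, and let L > 0. For h > 0 define 𝔅_h := { E ∈ [E₀ − Lh, E₀ + Lh] : cos(A(E)/(2h)) = 0 }. Then there exist C > 0 and h₀ > 0 such that for all h ∈ (0,h₀] and all E, E' ∈ 𝔅_h with E < E' and no element of 𝔅_h strictly between E and E', one has |E' − E − 2πh/A'(E₀)| ≤ C h². -/

import Mathlib

open Set

set_option maxHeartbeats 1000000 in
/-- Spacing of the Bohr–Sommerfeld roots: if `A` is C² near `E₀` with `A'(E₀) > 0` and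
`𝔅_h = {E ∈ [E₀−Lh, E₀+Lh] : cos(A(E)/(2h)) = 0}`, then any two successive points of `𝔅_h`
are at distance `2πh/A'(E₀) + O(h²)`. -/
theorem stmt_11 (E₀ L : ℝ) (hL : 0 < L)
    (U : Set ℝ) (hUo : IsOpen U) (hE₀U : E₀ ∈ U)
    (A : ℝ → ℝ) (hA : ContDiffOn ℝ 2 A U) (hA' : 0 < deriv A E₀) :
    ∃ C > 0, ∃ h₀ > 0, ∀ h ∈ Ioc (0:ℝ) h₀, ∀ E E' : ℝ,
      E ∈ Icc (E₀ - L * h) (E₀ + L * h) → Real.cos (A E / (2 * h)) = 0 →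
      E' ∈ Icc (E₀ - L * h) (E₀ + L * h) → Real.cos (A E' / (2 * h)) = 0 →
      E < E' →
      (∀ E'' ∈ Icc (E₀ - L * h) (E₀ + L * h),
        Real.cos (A E'' / (2 * h)) = 0 → ¬(E < E'' ∧ E'' < E')) →
      |E' - E - 2 * Real.pi * h / deriv A E₀| ≤ C * h ^ 2 := by
  obtain ⟨ε, hε, hεU⟩ := Metric.isOpen_iff.mp hUo E₀ hE₀U
  set c₀ := deriv A E₀ with hc₀
  have hd1 : ContDiffOn ℝ 1 (deriv A) U := hA.deriv_of_isOpen hUo (by norm_num)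
  have hdc : ContinuousOn (deriv A) U := hA.continuousOn_deriv_of_isOpen hUo (by norm_num)
  have hdca : ContinuousAt (deriv A) E₀ := hdc.continuousAt (hUo.mem_nhds hE₀U)
  obtain ⟨δ, hδ, hδ'⟩ := Metric.continuousAt_iff.mp hdca (c₀/2) (by linarith)
  set ρ := min (ε/2) (δ/2) with hρdef
  have hρ : 0 < ρ := lt_min (by linarith) (by linarith)
  set B := Metric.closedBall E₀ ρ with hBdef
  have hBU : B ⊆ U := by
    intro x hx
    apply hεU
    have hxd : dist x E₀ ≤ ρ := Metric.mem_closedBall.mp hx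
    have : ρ ≤ ε/2 := min_le_left _ _
    exact Metric.mem_ball.mpr (by linarith)
  have hE₀B : E₀ ∈ B := Metric.mem_closedBall_self hρ.le
  have hlow : ∀ x ∈ B, c₀/2 ≤ deriv A x := by
    intro x hx
    have hdist : dist x E₀ < δ := by
      have h1 : dist x E₀ ≤ ρ := Metric.mem_closedBall.mp hx
      have h2 : ρ ≤ δ/2 := min_le_right _ _
      linarith
    have h3 := hδ' hdist
    rw [Real.dist_eq] at h3
    rw [← hc₀] at h3
    have h4 := abs_lt.mp h3
    linarith [h4.1]
  have hcomp : IsCompact B := isCompact_closedBall _ _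
  have hdd : ContinuousOn (deriv (deriv A)) U := hd1.continuousOn_deriv_of_isOpen hUo le_rfl
  obtain ⟨M, hM⟩ := hcomp.exists_bound_of_continuousOn (hdd.mono hBU)
  have hM0 : 0 ≤ M := le_trans (norm_nonneg _) (hM E₀ hE₀B)
  have hdiff : DifferentiableOn ℝ (deriv A) U := hd1.differentiableOn one_ne_zero
  have hlip : ∀ x ∈ B, ∀ y ∈ B, |deriv A y - deriv A x| ≤ M * |y - x| := by
    intro x hx y hy
    have h1 : ∀ z ∈ B, HasDerivWithinAt (deriv A) (deriv (deriv A) z) B z := fun z hz =>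
      ((hdiff.differentiableAt (hUo.mem_nhds (hBU hz))).hasDerivAt).hasDerivWithinAt
    have := Convex.norm_image_sub_le_of_norm_hasDerivWithin_le h1 hM
      (convex_closedBall _ _) hx hy
    simpa [Real.norm_eq_abs] using this
  have hCnn : 0 ≤ 2*Real.pi*M*L/((c₀/2)*c₀) := by
    apply div_nonneg
    · exact mul_nonneg (mul_nonneg (by positivity) hM0) hL.le
    · nlinarith
  refine ⟨2*Real.pi*M*L/((c₀/2)*c₀) + 1, by linarith, min (ρ/L) 1,
    lt_min (div_pos hρ hL) one_pos, ?_⟩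
  intro h hh E E' hE hcE hE' hcE' hEE' hsucc
  obtain ⟨hh0, hh1⟩ := hh
  have hLh : L * h ≤ ρ := by
    have h1 : h ≤ ρ/L := le_trans hh1 (min_le_left _ _)
    calc L*h ≤ L*(ρ/L) := by nlinarith
    _ = ρ := by field_simp
  have hWB : Icc (E₀ - L*h) (E₀ + L*h) ⊆ B := by
    intro x hx
    rw [hBdef, Metric.mem_closedBall, Real.dist_eq]
    rw [mem_Icc] at hx
    rw [abs_le]
    constructor <;> linarith [hx.1, hx.2]
  have hAcont : ContinuousOn A U := hA.continuousOn
  have hsub : Icc E E' ⊆ Icc (E₀ - L*h) (E₀ + L*h) := Icc_subset_Icc hE.1 hE'.2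
  have hsubU : Icc E E' ⊆ U := fun x hx => hBU (hWB (hsub hx))
  have hmono : StrictMonoOn A (Icc (E₀ - L*h) (E₀ + L*h)) :=
    strictMonoOn_of_deriv_pos (convex_Icc _ _) (hAcont.mono fun x hx => hBU (hWB hx))
      (fun x hx => lt_of_lt_of_le (half_pos hA') (hlow x (hWB (interior_subset hx))))
  have hAE : A E < A E' := hmono hE hE' hEE'
  obtain ⟨n, hn⟩ := Real.cos_eq_zero_iff.mp hcE
  obtain ⟨n', hn'⟩ := Real.cos_eq_zero_iff.mp hcE'
  have h2h : (0:ℝ) < 2*h := by linarith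
  have hab : A E / (2*h) < A E' / (2*h) := by gcongr
  have hnn' : n < n' := by
    by_contra hcon
    push_neg at hcon
    have hc : (n':ℝ) ≤ n := by exact_mod_cast hcon
    rw [hn, hn'] at hab
    nlinarith [Real.pi_pos]
  have hdiff_eq : A E' - A E = ((n' : ℝ) - n) * (2 * Real.pi * h) := by
    have h1 := (div_eq_iff h2h.ne').mp hn
    have h2 := (div_eq_iff h2h.ne').mp hn'
    rw [h1, h2]; ring
  have hn'le : n' ≤ n + 1 := by
    by_contra hc
    push_neg at hc
    have hgc : ContinuousOn (fun x => A x / (2*h)) (Icc E E') :=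
      (hAcont.mono hsubU).div_const _
    have hmem : A E / (2*h) + Real.pi ∈ Ioo (A E / (2*h)) (A E' / (2*h)) := by
      constructor
      · linarith [Real.pi_pos]
      · rw [hn, hn']
        have h2 : (n:ℝ) + 2 ≤ n' := by exact_mod_cast (by omega : (n+2:ℤ) ≤ n')
        nlinarith [Real.pi_pos]
    obtain ⟨E'', hE''mem, hgE''⟩ := intermediate_value_Ioo hEE'.le hgc hmem
    refine hsucc E'' (hsub (Ioo_subset_Icc_self hE''mem)) ?_ ⟨hE''mem.1, hE''mem.2⟩
    apply Real.cos_eq_zero_iff.mpr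
    have hg2 : A E'' / (2*h) = A E/(2*h) + Real.pi := hgE''
    exact ⟨n+1, by rw [hg2, hn]; push_cast; ring⟩
  have hn'eq : n' = n + 1 := by omega
  have hAA : A E' - A E = 2*Real.pi*h := by
    rw [hdiff_eq, hn'eq]; push_cast; ring
  have hderivAt : ∀ x ∈ Ioo E E', HasDerivAt A (deriv A x) x := fun x hx =>
    (((hA.differentiableOn (by norm_num)).differentiableAt
      (hUo.mem_nhds (hsubU (Ioo_subset_Icc_self hx))))).hasDerivAt
  obtain ⟨ξ, hξ, hslope⟩ := exists_hasDerivAt_eq_slope A (deriv A) hEE'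
    (hAcont.mono hsubU) hderivAt
  have hξW : ξ ∈ Icc (E₀ - L*h) (E₀ + L*h) := hsub (Ioo_subset_Icc_self hξ)
  have hξB : ξ ∈ B := hWB hξW
  have hdξ : c₀/2 ≤ deriv A ξ := hlow _ hξB
  have hdξpos : 0 < deriv A ξ := lt_of_lt_of_le (half_pos hA') hdξ
  have hEE'pos : 0 < E' - E := sub_pos.mpr hEE'
  have h1 : deriv A ξ = 2*Real.pi*h/(E'-E) := by rw [hslope, hAA]
  have hval : E' - E = 2*Real.pi*h/deriv A ξ := by
    rw [eq_div_iff hdξpos.ne', h1]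
    field_simp
  have hlipξ := hlip E₀ hE₀B ξ hξB
  have hξdist : |ξ - E₀| ≤ L*h := by
    rw [mem_Icc] at hξW
    rw [abs_le]
    constructor <;> linarith [hξW.1, hξW.2]
  have hbound : |deriv A ξ - c₀| ≤ M * (L*h) := by
    rw [← hc₀] at hlipξ
    exact le_trans hlipξ (mul_le_mul_of_nonneg_left hξdist hM0)
  set d := deriv A ξ with hd
  have heq : E' - E - 2*Real.pi*h/c₀ = 2*Real.pi*h * (c₀ - d) / (d * c₀) := by
    rw [hval]
    field_simp
  have h2πh : (0:ℝ) ≤ 2*Real.pi*h := by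
    have := Real.pi_pos; nlinarith
  have habs : |E' - E - 2*Real.pi*h/c₀| = 2*Real.pi*h * |c₀ - d| / (d * c₀) := by
    rw [heq, abs_div, abs_mul, abs_of_nonneg h2πh, abs_of_pos (mul_pos hdξpos hA')]
  have hb2 : |c₀ - d| ≤ M * (L*h) := by
    rw [abs_sub_comm]; exact hbound
  calc |E' - E - 2*Real.pi*h/c₀| = 2*Real.pi*h * |c₀ - d| / (d * c₀) := habs
    _ ≤ 2*Real.pi*h * (M*(L*h)) / ((c₀/2) * c₀) := by
        apply div_le_div₀
        · exact mul_nonneg h2πh (mul_nonneg hM0 (mul_nonneg hL.le hh0.le))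
        · exact mul_le_mul_of_nonneg_left hb2 h2πh
        · nlinarith
        · exact mul_le_mul_of_nonneg_right hdξ hA'.le
    _ = (2*Real.pi*M*L/((c₀/2)*c₀)) * h^2 := by ring
    _ ≤ (2*Real.pi*M*L/((c₀/2)*c₀) + 1) * h^2 := by nlinarith [sq_nonneg h]
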